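/- arXiv:2101.04486 — 5 statements merged into one kernel-verified Lean document; each statement's English description precedes it below -/
import Mathlib

section
/- Let f(q) = ∑_{ℓ=1}^{L} μ_ℓ ∑_{i ∈ N_ℓ} q^(i) ln q^(i), where {N_ℓ}_{ℓ=1}^L is a partition of {1,…,n} and 0 < μ_ℓ ≤ 1 for each ℓ. Then for every q in the interior of the simplex and every h ∈ ℝⁿ, the Hessian of f satisfies ⟨∇²f(q)h, h⟩ ≥ β‖h‖₁², where β = min_{1≤ℓ≤L} μ_ℓ. -/
/-!
The function is separable, so its Hessian at `q` is diagonal and the quadratic form is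
`∑ i, w i * h i ^ 2 / q i`, where `w i` is the sum of the `μ ℓ` over the blocks containing `i`;
since the blocks cover all indices, `w i ≥ min μ`. Sedrakyan's form of Cauchy–Schwarz with
`∑ i, q i = 1` gives `(∑ i, |h i|) ^ 2 ≤ ∑ i, h i ^ 2 / q i`.
-/

open Real Finset Filter Topology

theorem iteratedFDeriv_two_sum_comp_apply_diag {ι : Type*} [Fintype ι] {g g' : ι → ℝ → ℝ}
    {g'' : ι → ℝ} {q : ι → ℝ}
    (hg : ∀ i, ∀ᶠ x in 𝓝 (q i), HasDerivAt (g i) (g' i x) x)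
    (hg' : ∀ i, HasDerivAt (g' i) (g'' i) (q i)) (h : ι → ℝ) :
    iteratedFDeriv ℝ 2 (fun p => ∑ i, g i (p i)) q (fun _ => h) = ∑ i, g'' i * h i ^ 2 := by
  let pr : ι → (ι → ℝ) →L[ℝ] ℝ := ContinuousLinearMap.proj
  have hfirst :
      fderiv ℝ (fun p => ∑ i, g i (p i)) =ᶠ[𝓝 q] fun p => ∑ i, g' i (p i) • pr i := by
    have : ∀ᶠ p in 𝓝 q, ∀ i, HasDerivAt (g i) (g' i (p i)) (p i) :=
      eventually_all.2 fun i => (continuous_apply i).continuousAt.eventually (hg i)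
    filter_upwards [this] with p hp
    exact (HasFDerivAt.fun_sum fun i _ => (hp i).comp_hasFDerivAt p (pr i).hasFDerivAt).fderiv
  have hsecond : HasFDerivAt (fun p => ∑ i, g' i (p i) • pr i)
      (∑ i, (g'' i • pr i).smulRight (pr i)) q :=
    HasFDerivAt.fun_sum fun i _ =>
      ((hg' i).comp_hasFDerivAt q (pr i).hasFDerivAt).smul_const (pr i)
  rw [iteratedFDeriv_two_apply, hfirst.fderiv_eq, hsecond.fderiv]
  simp [pr, sq, mul_assoc]

theorem sum_mul_sum_eq_sum_sum_filter_mul {κ ι R : Type*} [Fintype κ] [Fintype ι]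
    [DecidableEq ι] [CommSemiring R] (N : κ → Finset ι) (μ : κ → R) (a : ι → R) :
    ∑ ℓ, μ ℓ * ∑ i ∈ N ℓ, a i = ∑ i, (∑ ℓ with i ∈ N ℓ, μ ℓ) * a i := by
  simp_rw [mul_sum, sum_mul]
  exact sum_comm' fun ℓ i => by simp

theorem iteratedFDeriv_two_sum_mul_mul_log_apply_diag {ι : Type*} [Fintype ι] (w : ι → ℝ)
    {q : ι → ℝ} (hq : ∀ i, q i ≠ 0) (h : ι → ℝ) :
    iteratedFDeriv ℝ 2 (fun p => ∑ i, w i * (p i * log (p i))) q (fun _ => h) =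
      ∑ i, w i * h i ^ 2 / q i := by
  rw [iteratedFDeriv_two_sum_comp_apply_diag (g := fun i x => w i * (x * log x))
    (g' := fun i x => w i * (log x + 1)) (g'' := fun i => w i * (q i)⁻¹)]
  · exact sum_congr rfl fun i _ => by ring
  · exact fun i => (eventually_ne_nhds (hq i)).mono fun x hx =>
      (hasDerivAt_mul_log hx).const_mul (w i)
  · exact fun i => ((hasDerivAt_log (hq i)).add_const 1).const_mul (w i)

theorem iInf_le_sum_filter_mem {κ ι : Type*} [Fintype κ] [DecidableEq ι] (N : κ → Finset ι)
    {μ : κ → ℝ} (hμ : ∀ ℓ, 0 ≤ μ ℓ) {i : ι} {ℓ₀ : κ} (hi : i ∈ N ℓ₀) :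
    ⨅ ℓ, μ ℓ ≤ ∑ ℓ with i ∈ N ℓ, μ ℓ :=
  (ciInf_le (Set.finite_range μ).bddBelow ℓ₀).trans
    (single_le_sum (fun ℓ _ => hμ ℓ) (by simpa using hi))

theorem hessian_quadratic_form_lower_bound_general
    (n L : ℕ)
    (N : Fin L → Finset (Fin n)) (μ : Fin L → ℝ)
    (hμ : ∀ ℓ, 0 < μ ℓ ∧ μ ℓ ≤ 1)
    (hcover : Finset.univ.biUnion N = (Finset.univ : Finset (Fin n)))
    (f : (Fin n → ℝ) → ℝ)
    (hf : f = fun q => ∑ ℓ, μ ℓ * ∑ i ∈ N ℓ, q i * Real.log (q i))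
    (q : Fin n → ℝ) (hq_pos : ∀ i, 0 < q i) (hq_sum : ∑ i, q i = 1)
    (h : Fin n → ℝ) :
    (⨅ ℓ, μ ℓ) * (∑ i, |h i|) ^ 2 ≤ iteratedFDeriv ℝ 2 f q (fun _ => h) := by
  have hμ₀ : ∀ ℓ, 0 ≤ μ ℓ := fun ℓ => (hμ ℓ).1.le
  have hcs : (∑ i, |h i|) ^ 2 ≤ ∑ i, h i ^ 2 / q i := by
    simpa [hq_sum] using sq_sum_div_le_sum_sq_div univ (fun i => |h i|) fun i _ => hq_pos i
  simp_rw [hf, sum_mul_sum_eq_sum_sum_filter_mul N μ]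
  rw [iteratedFDeriv_two_sum_mul_mul_log_apply_diag _ (fun i => (hq_pos i).ne')]
  calc
    _ ≤ (⨅ ℓ, μ ℓ) * ∑ i, h i ^ 2 / q i := by gcongr; exact Real.iInf_nonneg hμ₀
    _ = ∑ i, (⨅ ℓ, μ ℓ) * (h i ^ 2 / q i) := mul_sum ..
    _ ≤ ∑ i, (∑ ℓ with i ∈ N ℓ, μ ℓ) * (h i ^ 2 / q i) := by
      gcongr with i
      · exact div_nonneg (sq_nonneg _) (hq_pos i).le
      · obtain ⟨ℓ, -, hi⟩ := mem_biUnion.1 (hcover ▸ mem_univ i)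
        exact iInf_le_sum_filter_mem N hμ₀ hi
    _ = _ := by simp only [mul_div_assoc]

theorem hessian_quadratic_form_lower_bound
    (n L : ℕ) (hL : 0 < L)
    (N : Fin L → Finset (Fin n)) (μ : Fin L → ℝ)
    (hμ : ∀ ℓ, 0 < μ ℓ ∧ μ ℓ ≤ 1)
    (hdisj : ∀ ℓ ℓ', ℓ ≠ ℓ' → Disjoint (N ℓ) (N ℓ'))
    (hcover : Finset.univ.biUnion N = (Finset.univ : Finset (Fin n)))
    (f : (Fin n → ℝ) → ℝ)
    (hf : f = fun q => ∑ ℓ, μ ℓ * ∑ i ∈ N ℓ, q i * Real.log (q i))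
    (q : Fin n → ℝ) (hq_pos : ∀ i, 0 < q i) (hq_sum : ∑ i, q i = 1)
    (h : Fin n → ℝ) :
    (⨅ ℓ, μ ℓ) * (∑ i, |h i|) ^ 2 ≤ iteratedFDeriv ℝ 2 f q (fun _ => h) :=
  hessian_quadratic_form_lower_bound_general n L N μ hμ hcover f hf q hq_pos hq_sum h
end

section
/- The generalized entropy E⋆(q) = ∑_{ℓ=1}^{L} μ_ℓ ∑_{i ∈ N_ℓ} q^(i) ln q^(i) + ∑_{ℓ=1}^{L} (1 − μ_ℓ)(∑_{i ∈ N_ℓ} q^(i)) ln(∑_{i ∈ N_ℓ} q^(i)) is β-strongly convex on the simplex △ with respect to the ℓ₁ norm, where β = min_{1≤ℓ≤L} μ_ℓ; that is, for all q, q̄ ∈ △ and λ ∈ [0,1], E⋆(λq + (1−λ)q̄) ≤ λE⋆(q) + (1−λ)E⋆(q̄) − (β/2)λ(1−λ)‖q − q̄‖₁². -/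
/-!
Write `E⋆ = β H + R` with `H x = ∑ xᵢ log xᵢ`, where `R` collects the block terms with the
nonnegative weights `μ_ℓ - β` and `1 - μ_ℓ`; `R` is convex, so it suffices that `H` is
`1`-strongly convex for `‖·‖₁` on the simplex. For the mixture `m = t q + (1 - t) q̄`,
`t H q + (1 - t) H q̄ - H m = t KL(q ‖ m) + (1 - t) KL(q̄ ‖ m)`, and Pinsker's inequality bounds
the right side below by `½ t (1 - t) ‖q - q̄‖₁²`, since `q - m = (1 - t)(q - q̄)` and
`q̄ - m = t (q̄ - q)`. Pinsker follows from the pointwise bound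
`3 (r - 1)² ≤ (2 r + 4) (r log r - r + 1)` and Cauchy–Schwarz.
-/

open Real Finset InformationTheory

lemma isMinOn_Ioi_of_hasDerivAt {f f' : ℝ → ℝ} {a c : ℝ} (hc : a < c)
    (hf : ∀ x, a < x → HasDerivAt f (f' x) x)
    (hf'_left : ∀ x, a < x → x < c → f' x ≤ 0) (hf'_right : ∀ x, c < x → 0 ≤ f' x) :
    IsMinOn f (Set.Ioi a) c := by
  intro x (hx : a < x)
  have hcont : ContinuousOn f (Set.uIcc c x) := fun y hy =>
    (hf y (lt_of_lt_of_le (lt_min hc hx) hy.1)).continuousAt.continuousWithinAt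
  have hderiv : ∀ y ∈ interior (Set.uIcc c x),
      HasDerivWithinAt f (f' y) (interior (Set.uIcc c x)) y := fun y hy =>
    (hf y (lt_of_lt_of_le (lt_min hc hx) (interior_subset hy).1)).hasDerivWithinAt
  rcases le_total c x with hcx | hxc
  · rw [Set.uIcc_of_le hcx] at hcont hderiv
    refine monotoneOn_of_hasDerivWithinAt_nonneg (convex_Icc c x) hcont hderiv (fun y hy => ?_)
      (Set.left_mem_Icc.2 hcx) (Set.right_mem_Icc.2 hcx) hcx
    rw [interior_Icc] at hy
    exact hf'_right y hy.1
  · rw [Set.uIcc_of_ge hxc] at hcont hderiv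
    refine antitoneOn_of_hasDerivWithinAt_nonpos (convex_Icc x c) hcont hderiv (fun y hy => ?_)
      (Set.left_mem_Icc.2 hxc) (Set.right_mem_Icc.2 hxc) hxc
    rw [interior_Icc] at hy
    exact hf'_left y (hx.trans hy.1) hy.2

lemma monotoneOn_add_one_mul_log_sub_two_mul_sub_one :
    MonotoneOn (fun r => (r + 1) * log r - 2 * (r - 1)) (Set.Ioi 0) := by
  have hderiv : ∀ r : ℝ, 0 < r →
      HasDerivAt (fun r => (r + 1) * log r - 2 * (r - 1)) (log r + r⁻¹ - 1) r := fun r hr => by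
    refine ((((hasDerivAt_id r).add_const 1).mul (hasDerivAt_log hr.ne')).sub
      (((hasDerivAt_id r).sub_const 1).const_mul 2)).congr_deriv ?_
    simp only [id]
    field_simp
    ring
  refine monotoneOn_of_hasDerivWithinAt_nonneg (f' := fun r => log r + r⁻¹ - 1) (convex_Ioi 0)
    (fun r hr => (hderiv r hr).continuousAt.continuousWithinAt) (fun r hr => ?_) (fun r hr => ?_)
  · rw [interior_Ioi] at hr
    exact (hderiv r hr).hasDerivWithinAt
  · rw [interior_Ioi] at hr
    linarith [one_sub_inv_le_log_of_pos hr]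

lemma three_halves_mul_sq_sub_one_le_mul_klFun {r : ℝ} (hr : 0 ≤ r) :
    3 / 2 * (r - 1) ^ 2 ≤ (r + 2) * klFun r := by
  rcases hr.eq_or_lt with rfl | hr
  · norm_num [klFun_zero]
  set g : ℝ → ℝ := fun r => (r + 2) * klFun r - 3 / 2 * (r - 1) ^ 2
  have hderiv : ∀ x, 0 < x → HasDerivAt g (2 * ((x + 1) * log x - 2 * (x - 1))) x := fun x hx => by
    refine ((((hasDerivAt_id x).add_const 2).mul (hasDerivAt_klFun hx.ne')).sub
      ((((hasDerivAt_id x).sub_const 1).pow 2).const_mul (3 / 2))).congr_deriv ?_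
    simp only [klFun_apply, id]
    ring
  have hF := monotoneOn_add_one_mul_log_sub_two_mul_sub_one
  have hmin : IsMinOn g (Set.Ioi 0) 1 := isMinOn_Ioi_of_hasDerivAt one_pos hderiv
    (fun x hx hx1 => by
      have := hF hx (Set.mem_Ioi.2 one_pos) hx1.le
      simp only [log_one] at this
      linarith)
    (fun x hx => by
      have := hF (Set.mem_Ioi.2 one_pos) (Set.mem_Ioi.2 (one_pos.trans hx)) hx.le
      simp only [log_one] at this
      linarith)
  have := hmin (Set.mem_Ioi.2 hr)
  simp only [Set.mem_ofPred_eq, g, klFun_one] at this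
  linarith

lemma mul_klFun_div {a b : ℝ} (hb : b ≠ 0) :
    b * klFun (a / b) = a * log a - a * log b + b - a := by
  rcases eq_or_ne a 0 with rfl | ha
  · simp [klFun_zero]
  rw [klFun_apply, log_div ha hb]
  field_simp

lemma three_halves_mul_sq_sub_div_le {a b : ℝ} (ha : 0 ≤ a) (hb : 0 < b) :
    3 / 2 * ((a - b) ^ 2 / (a + 2 * b)) ≤ a * log a - a * log b + b - a := by
  have hab : 0 < a + 2 * b := by linarith
  have key := three_halves_mul_sq_sub_one_le_mul_klFun (div_nonneg ha hb.le)
  rw [← mul_klFun_div hb.ne', mul_div_assoc', div_le_iff₀ hab]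
  have hl : 3 / 2 * (a - b) ^ 2 = b ^ 2 * (3 / 2 * (a / b - 1) ^ 2) := by field_simp
  have hr : b * klFun (a / b) * (a + 2 * b) = b ^ 2 * ((a / b + 2) * klFun (a / b)) := by
    field_simp
  rw [hl, hr]
  exact mul_le_mul_of_nonneg_left key (sq_nonneg b)

theorem pinsker {ι : Type*} [Fintype ι] {p m : ι → ℝ} (hp : ∀ i, 0 ≤ p i) (hm : ∀ i, 0 ≤ m i)
    (hp1 : ∑ i, p i = 1) (hm1 : ∑ i, m i = 1) (hpm : ∀ i, m i = 0 → p i = 0) :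
    (∑ i, |p i - m i|) ^ 2 ≤ 2 * ∑ i, (p i * log (p i) - p i * log (m i)) := by
  have hden : ∀ i, 0 ≤ p i + 2 * m i := fun i => by linarith [hp i, hm i]
  have hcs : (∑ i, |p i - m i|) ^ 2 ≤
      (∑ i, (p i - m i) ^ 2 / (p i + 2 * m i)) * ∑ i, (p i + 2 * m i) := by
    refine sum_sq_le_sum_mul_sum_of_sq_le_mul _ (fun i _ => div_nonneg (sq_nonneg _) (hden i))
      (fun i _ => hden i) (fun i _ => ?_)
    rcases (hden i).eq_or_lt with h | h
    · have hm0 : m i = 0 := by linarith [hp i, hm i]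
      simp [hm0, hpm i hm0]
    · rw [sq_abs, div_mul_cancel₀ _ h.ne']
  have hpt : ∀ i, 3 / 2 * ((p i - m i) ^ 2 / (p i + 2 * m i)) ≤
      p i * log (p i) - p i * log (m i) + m i - p i := fun i => by
    rcases (hm i).eq_or_lt with h | h
    · simp [← h, hpm i h.symm]
    · exact three_halves_mul_sq_sub_div_le (hp i) h
  have hsum := sum_le_sum fun i (_ : i ∈ Finset.univ) => hpt i
  rw [← mul_sum] at hsum
  simp only [sum_add_distrib, sum_sub_distrib, ← mul_sum, hp1, hm1] at hcs hsum ⊢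
  linarith

noncomputable def negEntropy {ι : Type*} [Fintype ι] (x : ι → ℝ) : ℝ := ∑ i, x i * log (x i)

theorem negEntropy_smul_add_smul_le {ι : Type*} [Fintype ι] {q q' : ι → ℝ}
    (hq : ∀ i, 0 ≤ q i) (hq1 : ∑ i, q i = 1) (hq' : ∀ i, 0 ≤ q' i) (hq'1 : ∑ i, q' i = 1)
    {t : ℝ} (ht : t ∈ Set.Icc (0 : ℝ) 1) :
    negEntropy (t • q + (1 - t) • q') ≤ t * negEntropy q + (1 - t) * negEntropy q'
      - 1 / 2 * t * (1 - t) * (∑ i, |q i - q' i|) ^ 2 := by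
  obtain ⟨ht0, ht1⟩ := ht
  rcases ht0.eq_or_lt with rfl | ht0
  · simp
  rcases ht1.eq_or_lt with rfl | ht1
  · simp
  set m := t • q + (1 - t) • q'
  have hm : ∀ i, m i = t * q i + (1 - t) * q' i := fun i => rfl
  have hqt : ∀ i, 0 ≤ t * q i := fun i => mul_nonneg ht0.le (hq i)
  have hq't : ∀ i, 0 ≤ (1 - t) * q' i := fun i => mul_nonneg (sub_nonneg.2 ht1.le) (hq' i)
  have hm0 : ∀ i, 0 ≤ m i := fun i => (hm i).symm ▸ add_nonneg (hqt i) (hq't i)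
  have hm1 : ∑ i, m i = 1 := by simp only [hm, sum_add_distrib, ← mul_sum, hq1, hq'1]; ring
  have hqm : ∀ i, m i = 0 → q i = 0 := fun i h =>
    (mul_eq_zero.1 ((add_eq_zero_iff_of_nonneg (hqt i) (hq't i)).1 ((hm i) ▸ h)).1).resolve_left
      ht0.ne'
  have hq'm : ∀ i, m i = 0 → q' i = 0 := fun i h =>
    (mul_eq_zero.1 ((add_eq_zero_iff_of_nonneg (hqt i) (hq't i)).1 ((hm i) ▸ h)).2).resolve_left
      (sub_ne_zero.2 ht1.ne')
  have hdist : ∑ i, |q i - m i| = (1 - t) * ∑ i, |q i - q' i| := by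
    rw [mul_sum]
    refine sum_congr rfl fun i _ => ?_
    rw [show q i - m i = (1 - t) * (q i - q' i) by rw [hm]; ring, abs_mul,
      abs_of_nonneg (sub_nonneg.2 ht1.le)]
  have hdist' : ∑ i, |q' i - m i| = t * ∑ i, |q i - q' i| := by
    rw [mul_sum]
    refine sum_congr rfl fun i _ => ?_
    rw [show q' i - m i = -(t * (q i - q' i)) by rw [hm]; ring, abs_neg, abs_mul,
      abs_of_nonneg ht0.le]
  have hmix : negEntropy m = t * ∑ i, q i * log (m i) + (1 - t) * ∑ i, q' i * log (m i) := by
    simp only [negEntropy, mul_sum, ← sum_add_distrib, hm]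
    exact sum_congr rfl fun i _ => by ring
  have hkl := pinsker hq hm0 hq1 hm1 hqm
  have hkl' := pinsker hq' hm0 hq'1 hm1 hq'm
  rw [hdist, sum_sub_distrib] at hkl
  rw [hdist', sum_sub_distrib] at hkl'
  rw [hmix]
  unfold negEntropy
  nlinarith [mul_le_mul_of_nonneg_left hkl ht0.le,
    mul_le_mul_of_nonneg_left hkl' (sub_nonneg.2 ht1.le)]

theorem ConvexOn.sum {𝕜 E β ι : Type*} [Semiring 𝕜] [PartialOrder 𝕜] [AddCommMonoid E]
    [AddCommMonoid β] [PartialOrder β] [IsOrderedAddMonoid β] [SMul 𝕜 E] [Module 𝕜 β]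
    {S : Set E} (hS : Convex 𝕜 S) {s : Finset ι} {f : ι → E → β}
    (hf : ∀ i ∈ s, ConvexOn 𝕜 S (f i)) : ConvexOn 𝕜 S fun x => ∑ i ∈ s, f i x := by
  classical
  induction s using Finset.induction_on with
  | empty => simpa using convexOn_const 0 hS
  | insert i s hi ih =>
    simp_rw [sum_insert hi]
    exact (hf i (mem_insert_self i s)).add (ih fun j hj => hf j (mem_insert_of_mem hj))

lemma convexOn_mul_log_sum {ι : Type*} (s : Finset ι) :
    ConvexOn ℝ (Set.Ici 0) fun x : ι → ℝ => (∑ i ∈ s, x i) * log (∑ i ∈ s, x i) := by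
  refine (convexOn_mul_log.comp_linearMap (∑ i ∈ s, LinearMap.proj i)).subset
    (fun x hx => ?_) (convex_Ici 0) |>.congr fun x _ => ?_
  · simpa using sum_nonneg fun i (_ : i ∈ s) => hx i
  · simp

lemma convexOn_sum_mul_log {ι : Type*} (s : Finset ι) :
    ConvexOn ℝ (Set.Ici 0) fun x : ι → ℝ => ∑ i ∈ s, x i * log (x i) := by
  simpa using ConvexOn.sum (convex_Ici 0) fun i (_ : i ∈ s) => convexOn_mul_log_sum {i}

theorem generalized_entropy_strongly_convex_general
    (n L : ℕ)
    (N : Fin L → Finset (Fin n)) (μ : Fin L → ℝ)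
    (hμ : ∀ ℓ, 0 < μ ℓ ∧ μ ℓ ≤ 1)
    (hdisj : ∀ ℓ ℓ', ℓ ≠ ℓ' → Disjoint (N ℓ) (N ℓ'))
    (hcover : Finset.univ.biUnion N = (Finset.univ : Finset (Fin n)))
    (Estar : (Fin n → ℝ) → ℝ)
    (hEstar : Estar = fun q => (∑ ℓ, μ ℓ * ∑ i ∈ N ℓ, q i * Real.log (q i)) +
      ∑ ℓ, (1 - μ ℓ) * ((∑ i ∈ N ℓ, q i) * Real.log (∑ i ∈ N ℓ, q i)))
    (β : ℝ) (hβ : β = ⨅ ℓ, μ ℓ)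
    (q qb : Fin n → ℝ)
    (hq : (∀ i, 0 ≤ q i) ∧ ∑ i, q i = 1)
    (hqb : (∀ i, 0 ≤ qb i) ∧ ∑ i, qb i = 1)
    (t : ℝ) (ht : t ∈ Set.Icc (0:ℝ) 1) :
    Estar (t • q + (1 - t) • qb) ≤
      t * Estar q + (1 - t) * Estar qb - β / 2 * t * (1 - t) * (∑ i, |q i - qb i|) ^ 2 := by
  have hβ0 : 0 ≤ β := hβ ▸ Real.iInf_nonneg fun ℓ => (hμ ℓ).1.le
  have hβμ : ∀ ℓ, β ≤ μ ℓ := hβ ▸ ciInf_le (Finite.bddBelow_range μ)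
  set R : (Fin n → ℝ) → ℝ := fun x => ∑ ℓ, ((μ ℓ - β) * ∑ i ∈ N ℓ, x i * log (x i) +
    (1 - μ ℓ) * ((∑ i ∈ N ℓ, x i) * log (∑ i ∈ N ℓ, x i)))
  have hsplit : ∀ x, Estar x = β * negEntropy x + R x := fun x => by
    rw [hEstar, negEntropy, ← hcover, sum_biUnion fun ℓ _ ℓ' _ => hdisj ℓ ℓ', mul_sum]
    beta_reduce
    rw [← sum_add_distrib, ← sum_add_distrib]
    exact sum_congr rfl fun ℓ _ => by ring
  have hR : ConvexOn ℝ (Set.Ici 0) R := ConvexOn.sum (convex_Ici 0) fun ℓ _ =>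
    ((convexOn_sum_mul_log _).smul (sub_nonneg.2 (hβμ ℓ))).add
      ((convexOn_mul_log_sum _).smul (sub_nonneg.2 (hμ ℓ).2))
  have hRmix := hR.2 hq.1 hqb.1 ht.1 (sub_nonneg.2 ht.2) (add_sub_cancel t 1)
  have hH := negEntropy_smul_add_smul_le hq.1 hq.2 hqb.1 hqb.2 ht
  simp only [hsplit, smul_eq_mul] at hRmix ⊢
  nlinarith [mul_le_mul_of_nonneg_left hH hβ0]

theorem generalized_entropy_strongly_convex
    (n L : ℕ) (hL : 0 < L)
    (N : Fin L → Finset (Fin n)) (μ : Fin L → ℝ)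
    (hμ : ∀ ℓ, 0 < μ ℓ ∧ μ ℓ ≤ 1)
    (hdisj : ∀ ℓ ℓ', ℓ ≠ ℓ' → Disjoint (N ℓ) (N ℓ'))
    (hcover : Finset.univ.biUnion N = (Finset.univ : Finset (Fin n)))
    (Estar : (Fin n → ℝ) → ℝ)
    (hEstar : Estar = fun q => (∑ ℓ, μ ℓ * ∑ i ∈ N ℓ, q i * Real.log (q i)) +
      ∑ ℓ, (1 - μ ℓ) * ((∑ i ∈ N ℓ, q i) * Real.log (∑ i ∈ N ℓ, q i)))
    (β : ℝ) (hβ : β = ⨅ ℓ, μ ℓ)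
    (q qb : Fin n → ℝ)
    (hq : (∀ i, 0 ≤ q i) ∧ ∑ i, q i = 1)
    (hqb : (∀ i, 0 ≤ qb i) ∧ ∑ i, qb i = 1)
    (t : ℝ) (ht : t ∈ Set.Icc (0:ℝ) 1) :
    Estar (t • q + (1 - t) • qb) ≤
      t * Estar q + (1 - t) * Estar qb - β / 2 * t * (1 - t) * (∑ i, |q i - qb i|) ^ 2 :=
  generalized_entropy_strongly_convex_general n L N μ hμ hdisj hcover Estar hEstar β hβ q qb hq hqb
    t ht
end

section
/- The nested logit surplus function E(v) = ln(∑_{ℓ=1}^{L} (∑_{i ∈ N_ℓ} e^{v^(i)/μ_ℓ})^{μ_ℓ}) is strongly smooth with respect to the ℓ∞ norm with modulus B = 1/min_{1≤ℓ≤L} μ_ℓ, i.e., ‖∇E(v) − ∇E(v̄)‖₁ ≤ B‖v − v̄‖∞ for all v, v̄ ∈ ℝⁿ. -/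
/-!
Write `d = v - vb`. Along the segment `vb + t d`, the derivative of `t ↦ ∇E · s` is a
bilinear form `Q(s, d)`: by the law of total covariance it is the covariance of the within-nest
means under the nest probabilities `P`, plus the within-nest covariances weighted by `P_ℓ / μ_ℓ`.
Each summand is positive semidefinite, so `|Q(s, d)| ≤ (D Q(s, s) + Q(d, d) / D) / 2`, and since
`μ_ℓ ≤ 1` the quadratic form satisfies `Q(x, x) ≤ ‖x‖∞² / min μ`. For `‖s‖∞ ≤ 1` and
`‖d‖∞ ≤ D` this bounds the derivative by `D / min μ`; the mean value theorem and the choice of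
`s` as the sign vector of `∇E(v) - ∇E(vb)` give the `ℓ¹` estimate.
Empty nests contribute nothing and are discarded first.
-/

open Real Finset

noncomputable section

namespace NestedLogit

lemma sum_abs_apply_single_le {α F : Type*} [Fintype α] [DecidableEq α] [FunLike F (α → ℝ) ℝ]
    [LinearMapClass F ℝ (α → ℝ) ℝ] (ℓ : F) {C : ℝ}
    (h : ∀ s : α → ℝ, (∀ i, |s i| ≤ 1) → ℓ s ≤ C) : ∑ i, |ℓ (Pi.single i 1)| ≤ C := by
  set s : α → ℝ := fun i => SignType.sign (ℓ (Pi.single i 1))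
  have hs : ℓ s = ∑ i, |ℓ (Pi.single i 1)| := by
    conv_lhs => rw [← univ_sum_single s]
    rw [map_sum]
    refine sum_congr rfl fun i _ => ?_
    rw [← mul_one (s i), ← smul_eq_mul, Pi.single_smul, map_smul, smul_eq_mul]
    exact sign_mul_self _
  rw [← hs]
  refine h s fun i => ?_
  rcases lt_trichotomy (ℓ (Pi.single i 1)) 0 with hsign | hsign | hsign <;> simp [s, hsign]

section WeightedCovariance

variable {κ : Type*} (F : Finset κ) (q : κ → ℝ)

structure IsProbWeights : Prop where
  nonneg : ∀ i ∈ F, 0 ≤ q i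
  sum_eq_one : ∑ i ∈ F, q i = 1

def wmean (x : κ → ℝ) : ℝ := ∑ i ∈ F, q i * x i

def wcov (x y : κ → ℝ) : ℝ := wmean F q (x * y) - wmean F q x * wmean F q y

variable {F q}

lemma wcov_eq_sum (hq : IsProbWeights F q) (x y : κ → ℝ) :
    wcov F q x y = ∑ i ∈ F, q i * ((x i - wmean F q x) * (y i - wmean F q y)) := by
  have expand : ∀ i ∈ F, q i * ((x i - wmean F q x) * (y i - wmean F q y)) =
      q i * (x * y) i - wmean F q y * (q i * x i) - wmean F q x * (q i * y i) +
        wmean F q x * wmean F q y * q i := fun i _ => by simp only [Pi.mul_apply]; ring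
  rw [sum_congr rfl expand, sum_add_distrib, sum_sub_distrib, sum_sub_distrib, ← mul_sum,
    ← mul_sum, ← mul_sum, hq.sum_eq_one, wcov]
  simp only [wmean]
  ring

lemma wcov_self_nonneg (hq : IsProbWeights F q) (x : κ → ℝ) : 0 ≤ wcov F q x x := by
  rw [wcov_eq_sum hq]
  exact sum_nonneg fun i hi => mul_nonneg (hq.nonneg i hi) (mul_self_nonneg _)

lemma abs_wcov_le (hq : IsProbWeights F q) {D : ℝ} (hD : 0 < D) (x y : κ → ℝ) :
    |wcov F q x y| ≤ (D * wcov F q x x + wcov F q y y / D) / 2 := by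
  rw [wcov_eq_sum hq, wcov_eq_sum hq, wcov_eq_sum hq, mul_sum, sum_div, ← sum_add_distrib,
    sum_div]
  refine (abs_sum_le_sum_abs _ _).trans (sum_le_sum fun i hi => ?_)
  set a := x i - wmean F q x
  set b := y i - wmean F q y
  have hqi := hq.nonneg i hi
  -- AM-GM: `2 |a b| ≤ D a² + b² / D`
  have hsq : 0 ≤ q i * (D * |a| - |b|) ^ 2 / D := by positivity
  have key : D * (q i * (a * a)) + q i * (b * b) / D - 2 * (q i * (|a| * |b|)) =
      q i * (D * |a| - |b|) ^ 2 / D := by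
    rw [← abs_mul_abs_self a, ← abs_mul_abs_self b]
    field_simp
    ring
  rw [abs_mul, abs_mul, abs_of_nonneg hqi]
  linarith

lemma wmean_le (hq : IsProbWeights F q) {x : κ → ℝ} {K : ℝ} (hx : ∀ i ∈ F, x i ≤ K) :
    wmean F q x ≤ K :=
  calc wmean F q x ≤ ∑ i ∈ F, q i * K :=
        sum_le_sum fun i hi => mul_le_mul_of_nonneg_left (hx i hi) (hq.nonneg i hi)
    _ = K := by rw [← sum_mul, hq.sum_eq_one, one_mul]

end WeightedCovariance

section NestedCovariance

variable {ι α : Type*} [Fintype ι] (N : ι → Finset α) (μ P : ι → ℝ) (q : ι → α → ℝ)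

/-- The Hessian of the nested logit surplus: a law of total covariance whose within-nest part
is weighted by `1 / μ k`. -/
def nestedCov (x y : α → ℝ) : ℝ :=
  ∑ k, P k / μ k * wcov (N k) (q k) x y +
    wcov univ P (fun k => wmean (N k) (q k) x) (fun k => wmean (N k) (q k) y)

variable {N μ P q}

lemma abs_nestedCov_le (hμ : ∀ k, 0 < μ k) (hP : IsProbWeights univ P)
    (hq : ∀ k, IsProbWeights (N k) (q k)) {D : ℝ} (hD : 0 < D) (x y : α → ℝ) :
    |nestedCov N μ P q x y| ≤ (D * nestedCov N μ P q x x + nestedCov N μ P q y y / D) / 2 := by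
  have hw : ∀ k, 0 ≤ P k / μ k := fun k => div_nonneg (hP.nonneg k (mem_univ k)) (hμ k).le
  have within : |∑ k, P k / μ k * wcov (N k) (q k) x y| ≤
      ∑ k, P k / μ k * ((D * wcov (N k) (q k) x x + wcov (N k) (q k) y y / D) / 2) := by
    refine (abs_sum_le_sum_abs _ _).trans (sum_le_sum fun k _ => ?_)
    rw [abs_mul, abs_of_nonneg (hw k)]
    exact mul_le_mul_of_nonneg_left (abs_wcov_le (hq k) hD x y) (hw k)
  have between := abs_wcov_le hP hD (fun k => wmean (N k) (q k) x) (fun k => wmean (N k) (q k) y)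
  have split : ∑ k, P k / μ k * ((D * wcov (N k) (q k) x x + wcov (N k) (q k) y y / D) / 2) =
      (D * ∑ k, P k / μ k * wcov (N k) (q k) x x +
        (∑ k, P k / μ k * wcov (N k) (q k) y y) / D) / 2 := by
    rw [mul_sum, sum_div, ← sum_add_distrib, sum_div]
    exact sum_congr rfl fun k _ => by ring
  calc _ ≤ _ := abs_add_le _ _
    _ ≤ _ := add_le_add within between
    _ = _ := by rw [split, nestedCov, nestedCov]; ring

lemma nestedCov_self_le (hP : IsProbWeights univ P) (hq : ∀ k, IsProbWeights (N k) (q k))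
    {m K : ℝ} (hm0 : 0 < m) (hm1 : m ≤ 1) (hm : ∀ k, m ≤ μ k) {x : α → ℝ}
    (hx : ∀ j, x j ^ 2 ≤ K) : nestedCov N μ P q x x ≤ K / m := by
  set M := fun k => wmean (N k) (q k) x
  have per_nest : ∀ k, P k / μ k * wcov (N k) (q k) x x + P k * (M k * M k) ≤ P k * K / m := by
    intro k
    have hPk := hP.nonneg k (mem_univ k)
    have second_moment : wcov (N k) (q k) x x + M k * M k ≤ K := by
      rw [wcov, sub_add_cancel]
      exact wmean_le (hq k) fun j _ => by rw [Pi.mul_apply, ← sq]; exact hx j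
    have hμm : P k / μ k ≤ P k / m := div_le_div_of_nonneg_left hPk hm0 (hm k)
    have hone : P k ≤ P k / m := le_div_self hPk hm0 hm1
    calc _ ≤ P k / m * wcov (N k) (q k) x x + P k / m * (M k * M k) := by
          gcongr
          exacts [wcov_self_nonneg (hq k) x, mul_self_nonneg _]
      _ ≤ P k / m * K := by
          rw [← mul_add]; exact mul_le_mul_of_nonneg_left second_moment (by positivity)
      _ = _ := by ring
  have total : ∑ k, (P k / μ k * wcov (N k) (q k) x x + P k * (M k * M k)) ≤ K / m :=
    calc _ ≤ ∑ k, P k * K / m := sum_le_sum fun k _ => per_nest k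
      _ = K / m := by rw [← sum_div, ← sum_mul, hP.sum_eq_one, one_mul]
  rw [sum_add_distrib] at total
  have expand : nestedCov N μ P q x x = ∑ k, P k / μ k * wcov (N k) (q k) x x +
      ∑ k, P k * (M k * M k) - wmean univ P M * wmean univ P M := by
    rw [nestedCov, wcov, add_sub_assoc]; rfl
  linarith [mul_self_nonneg (wmean univ P M)]

lemma abs_nestedCov_le_div (hP : IsProbWeights univ P) (hq : ∀ k, IsProbWeights (N k) (q k))
    {m D : ℝ} (hm0 : 0 < m) (hm1 : m ≤ 1) (hm : ∀ k, m ≤ μ k) {s d : α → ℝ}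
    (hs : ∀ j, |s j| ≤ 1) (hD : 0 ≤ D) (hd : ∀ j, |d j| ≤ D) :
    |nestedCov N μ P q s d| ≤ D / m := by
  rcases hD.eq_or_lt with rfl | hD
  · obtain rfl : d = 0 := funext fun j => abs_nonpos_iff.mp (hd j)
    simp [nestedCov, wcov, wmean]
  have hss := nestedCov_self_le hP hq hm0 hm1 hm (K := 1) fun j => by
    simpa using sq_le_sq.mpr ((hs j).trans (abs_one).ge)
  have hdd := nestedCov_self_le hP hq hm0 hm1 hm (K := D ^ 2) fun j =>
    sq_le_sq.mpr ((hd j).trans (le_abs_self D))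
  calc _ ≤ _ := abs_nestedCov_le (fun k => hm0.trans_le (hm k)) hP hq hD s d
    _ ≤ (D * (1 / m) + D ^ 2 / m / D) / 2 := by gcongr
    _ = D / m := by field_simp; ring

end NestedCovariance

section Surplus

variable {ι α : Type*} (N : ι → Finset α) (μ : ι → ℝ)

def nestSum (c u : α → ℝ) (k : ι) : ℝ := ∑ j ∈ N k, c j * exp (u j / μ k)

def withinProb (u : α → ℝ) (k : ι) (j : α) : ℝ := exp (u j / μ k) / nestSum N μ 1 u k

def nestMean (c u : α → ℝ) (k : ι) : ℝ := wmean (N k) (withinProb N μ u k) c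

def nestPowSum [Fintype ι] (u : α → ℝ) : ℝ := ∑ k, nestSum N μ 1 u k ^ μ k

def nestProb [Fintype ι] (u : α → ℝ) (k : ι) : ℝ :=
  nestSum N μ 1 u k ^ μ k / nestPowSum N μ u

def surplus [Fintype ι] (u : α → ℝ) : ℝ := log (nestPowSum N μ u)

variable {N μ}

lemma nestSum_one_pos {k : ι} (hk : (N k).Nonempty) (u : α → ℝ) : 0 < nestSum N μ 1 u k :=
  sum_pos (fun j _ => by simpa using exp_pos _) hk

lemma nestMean_eq_div (c u : α → ℝ) (k : ι) :
    nestMean N μ c u k = nestSum N μ c u k / nestSum N μ 1 u k := by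
  simp only [nestMean, wmean, withinProb, nestSum, sum_div]
  exact sum_congr rfl fun j _ => by ring

lemma isProbWeights_withinProb {k : ι} (hk : (N k).Nonempty) (u : α → ℝ) :
    IsProbWeights (N k) (withinProb N μ u k) where
  nonneg _ _ := div_nonneg (exp_pos _).le (nestSum_one_pos hk u).le
  sum_eq_one := by
    simpa [div_self (nestSum_one_pos hk u).ne', nestMean, wmean] using
      nestMean_eq_div (N := N) (μ := μ) 1 u k

lemma hasDerivAt_nestSum (c v d : α → ℝ) (k : ι) (t : ℝ) :
    HasDerivAt (fun t => nestSum N μ c (v + t • d) k)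
      (nestSum N μ (c * d) (v + t • d) k / μ k) t := by
  simp only [nestSum, sum_div]
  refine HasDerivAt.fun_sum fun j _ => ?_
  have hlin : HasDerivAt (fun t => (v + t • d) j / μ k) (d j / μ k) t := by
    simpa using (((hasDerivAt_id t).mul_const (d j)).const_add (v j)).div_const (μ k)
  refine ((hlin.exp).const_mul (c j)).congr_deriv ?_
  rw [Pi.mul_apply]
  ring

lemma hasDerivAt_nestMean {k : ι} (hk : (N k).Nonempty) (c v d : α → ℝ) (t : ℝ) :
    HasDerivAt (fun t => nestMean N μ c (v + t • d) k)
      (wcov (N k) (withinProb N μ (v + t • d) k) c d / μ k) t := by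
  simp only [nestMean_eq_div]
  have hA := (nestSum_one_pos (μ := μ) hk (v + t • d)).ne'
  refine ((hasDerivAt_nestSum c v d k t).div (hasDerivAt_nestSum 1 v d k t) hA).congr_deriv ?_
  change _ = (nestMean N μ (c * d) _ k - nestMean N μ c _ k * nestMean N μ d _ k) / μ k
  rw [nestMean_eq_div, nestMean_eq_div, nestMean_eq_div, one_mul]
  field_simp

lemma hasDerivAt_nestSum_rpow {k : ι} (hk : (N k).Nonempty) (hμ : μ k ≠ 0) (v d : α → ℝ)
    (t : ℝ) :
    HasDerivAt (fun t => nestSum N μ 1 (v + t • d) k ^ μ k)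
      (nestSum N μ 1 (v + t • d) k ^ μ k * nestMean N μ d (v + t • d) k) t := by
  have hA := (nestSum_one_pos (μ := μ) hk (v + t • d)).ne'
  refine ((hasDerivAt_nestSum 1 v d k t).rpow_const (p := μ k) (Or.inl hA)).congr_deriv ?_
  rw [nestMean_eq_div, one_mul, rpow_sub_one hA]
  field_simp

variable [Fintype ι]

lemma hasDerivAt_nestPowSum (hN : ∀ k, (N k).Nonempty) (hμ : ∀ k, μ k ≠ 0) (v d : α → ℝ)
    (t : ℝ) :
    HasDerivAt (fun t => nestPowSum N μ (v + t • d))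
      (∑ k, nestSum N μ 1 (v + t • d) k ^ μ k * nestMean N μ d (v + t • d) k) t :=
  HasDerivAt.fun_sum fun k _ => hasDerivAt_nestSum_rpow (hN k) (hμ k) v d t

lemma sum_nestProb_mul (x : ι → ℝ) (u : α → ℝ) :
    ∑ k, nestProb N μ u k * x k = (∑ k, nestSum N μ 1 u k ^ μ k * x k) / nestPowSum N μ u := by
  rw [sum_div]; exact sum_congr rfl fun k _ => by rw [nestProb]; ring

lemma nestPowSum_subtype_nonempty (hμ : ∀ k, μ k ≠ 0) (u : α → ℝ) :
    nestPowSum (fun k : {k // (N k).Nonempty} => N k.1) (fun k => μ k.1) u =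
      nestPowSum N μ u := by
  have empty_nests : ∑ k : {k // ¬(N k).Nonempty}, nestSum N μ 1 u k ^ μ k = 0 :=
    sum_eq_zero fun ⟨k, hk⟩ _ => by
      rw [nestSum, not_nonempty_iff_eq_empty.mp hk, sum_empty, zero_rpow (hμ k)]
  rw [nestPowSum, nestPowSum, ← Fintype.sum_subtype_add_sum_subtype (fun k => (N k).Nonempty)
    (fun k => nestSum N μ 1 u k ^ μ k), empty_nests, add_zero]
  rfl

variable [Nonempty ι]

lemma nestPowSum_pos (hN : ∀ k, (N k).Nonempty) (u : α → ℝ) :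
    0 < nestPowSum N μ u :=
  sum_pos (fun k _ => rpow_pos_of_pos (nestSum_one_pos (hN k) u) _) univ_nonempty

lemma isProbWeights_nestProb (hN : ∀ k, (N k).Nonempty) (u : α → ℝ) :
    IsProbWeights univ (nestProb N μ u) where
  nonneg k _ := div_nonneg (rpow_nonneg (nestSum_one_pos (hN k) u).le _) (nestPowSum_pos hN u).le
  sum_eq_one := by unfold nestProb; rw [← sum_div]; exact div_self (nestPowSum_pos hN u).ne'

lemma hasDerivAt_nestProb (hN : ∀ k, (N k).Nonempty) (hμ : ∀ k, μ k ≠ 0) (v d : α → ℝ)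
    (k : ι) (t : ℝ) :
    HasDerivAt (fun t => nestProb N μ (v + t • d) k)
      (nestProb N μ (v + t • d) k * (nestMean N μ d (v + t • d) k -
        ∑ l, nestProb N μ (v + t • d) l * nestMean N μ d (v + t • d) l)) t := by
  have hT := (nestPowSum_pos (μ := μ) hN (v + t • d)).ne'
  refine ((hasDerivAt_nestSum_rpow (hN k) (hμ k) v d t).div
    (hasDerivAt_nestPowSum hN hμ v d t) hT).congr_deriv ?_
  rw [sum_nestProb_mul, nestProb]
  field_simp

lemma hasDerivAt_surplus_comp_line (hN : ∀ k, (N k).Nonempty) (hμ : ∀ k, μ k ≠ 0)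
    (v d : α → ℝ) (t : ℝ) :
    HasDerivAt (fun t => surplus N μ (v + t • d))
      (∑ k, nestProb N μ (v + t • d) k * nestMean N μ d (v + t • d) k) t := by
  rw [sum_nestProb_mul]
  exact (hasDerivAt_nestPowSum hN hμ v d t).log (nestPowSum_pos hN _).ne'

lemma differentiableAt_surplus [Fintype α] (hN : ∀ k, (N k).Nonempty) (u : α → ℝ) :
    DifferentiableAt ℝ (surplus N μ) u := by
  refine DifferentiableAt.log ?_ (nestPowSum_pos hN u).ne'
  refine DifferentiableAt.fun_sum fun k _ => ?_
  refine DifferentiableAt.rpow_const ?_ (Or.inl (nestSum_one_pos (hN k) u).ne')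
  unfold nestSum
  fun_prop

lemma fderiv_surplus_apply [Fintype α] (hN : ∀ k, (N k).Nonempty) (hμ : ∀ k, μ k ≠ 0)
    (u d : α → ℝ) :
    fderiv ℝ (surplus N μ) u d = ∑ k, nestProb N μ u k * nestMean N μ d u k := by
  rw [← (differentiableAt_surplus hN u).lineDeriv_eq_fderiv]
  apply HasLineDerivAt.lineDeriv
  have h := hasDerivAt_surplus_comp_line hN hμ u d 0
  rwa [zero_smul, add_zero] at h

lemma hasDerivAt_fderiv_surplus_apply [Fintype α] (hN : ∀ k, (N k).Nonempty)
    (hμ : ∀ k, μ k ≠ 0) (v d s : α → ℝ) (t : ℝ) :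
    HasDerivAt (fun t => fderiv ℝ (surplus N μ) (v + t • d) s)
      (nestedCov N μ (nestProb N μ (v + t • d)) (withinProb N μ (v + t • d)) s d) t := by
  simp only [fderiv_surplus_apply hN hμ]
  set u := v + t • d
  refine (HasDerivAt.fun_sum fun k _ =>
    (hasDerivAt_nestProb hN hμ v d k t).mul (hasDerivAt_nestMean (hN k) s v d t)).congr_deriv ?_
  set P := nestProb N μ u
  set M := fun x k => nestMean N μ x u k
  have between : ∑ k, P k * (M d k - ∑ l, P l * M d l) * M s k =
      ∑ k, P k * (M s k * M d k) - (∑ k, P k * M s k) * ∑ k, P k * M d k := by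
    rw [sum_mul, ← sum_sub_distrib]
    exact sum_congr rfl fun k _ => by ring
  rw [sum_add_distrib, between, nestedCov, add_comm]
  congr 1
  exact sum_congr rfl fun k _ => by ring

theorem sum_abs_fderiv_surplus_sub_le [Fintype α] [DecidableEq α] (hN : ∀ k, (N k).Nonempty)
    {m : ℝ} (hm0 : 0 < m) (hm1 : m ≤ 1) (hm : ∀ k, m ≤ μ k) {v vb : α → ℝ} {D : ℝ}
    (hD : ∀ i, |v i - vb i| ≤ D) :
    ∑ i, |fderiv ℝ (surplus N μ) v (Pi.single i 1) -
      fderiv ℝ (surplus N μ) vb (Pi.single i 1)| ≤ D / m := by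
  have hμ : ∀ k, μ k ≠ 0 := fun k => (hm0.trans_le (hm k)).ne'
  obtain ⟨j, -⟩ := hN (Classical.arbitrary ι)
  have hD0 : 0 ≤ D := (abs_nonneg _).trans (hD j)
  refine sum_abs_apply_single_le (fderiv ℝ (surplus N μ) v - fderiv ℝ (surplus N μ) vb)
    fun s hs => ?_
  have hderiv := hasDerivAt_fderiv_surplus_apply hN hμ vb (v - vb) s
  have hbound : ∀ t : ℝ, ‖nestedCov N μ (nestProb N μ (vb + t • (v - vb)))
      (withinProb N μ (vb + t • (v - vb))) s (v - vb)‖ ≤ D / m := fun t =>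
    abs_nestedCov_le_div (isProbWeights_nestProb hN _)
      (fun k => isProbWeights_withinProb (hN k) _) hm0 hm1 hm hs hD0 hD
  have hmvt := norm_image_sub_le_of_norm_deriv_le_segment_01'
    (fun t _ => (hderiv t).hasDerivWithinAt) (fun t _ => hbound t)
  simp only [one_smul, zero_smul, add_zero, add_sub_cancel] at hmvt
  exact (le_abs_self _).trans hmvt

end Surplus

end NestedLogit

end

open NestedLogit in
theorem nested_logit_surplus_strongly_smooth_general
    (n L : ℕ)
    (N : Fin L → Finset (Fin n)) (μ : Fin L → ℝ)
    (hμ : ∀ ℓ, 0 < μ ℓ ∧ μ ℓ ≤ 1)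
    (E : (Fin n → ℝ) → ℝ)
    (hE : E = fun v => Real.log (∑ ℓ, (∑ i ∈ N ℓ, Real.exp (v i / μ ℓ)) ^ (μ ℓ)))
    (B : ℝ) (hB : B = 1 / ⨅ ℓ, μ ℓ) :
    ∀ v vb : Fin n → ℝ,
      ∑ i, |fderiv ℝ E v (Pi.single i 1) - fderiv ℝ E vb (Pi.single i 1)| ≤
        B * ⨆ i, |v i - vb i| := by
  intro v vb
  by_cases hne : ∃ k, (N k).Nonempty
  · obtain ⟨k₀, hk₀⟩ := hne
    have : Nonempty (Fin L) := ⟨k₀⟩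
    have : Nonempty {k // (N k).Nonempty} := ⟨⟨k₀, hk₀⟩⟩
    obtain ⟨k_min, hk_min⟩ := exists_eq_ciInf_of_finite (f := μ)
    have hm0 : 0 < ⨅ ℓ, μ ℓ := by rw [← hk_min]; exact (hμ k_min).1
    have hm : ∀ k, ⨅ ℓ, μ ℓ ≤ μ k := ciInf_le (Set.finite_range μ).bddBelow
    have hE_nonempty :
        E = surplus (fun k : {k // (N k).Nonempty} => N k.1) (fun k => μ k.1) := by
      funext u
      rw [surplus, nestPowSum_subtype_nonempty fun k => (hμ k).1.ne', hE]
      simp [nestPowSum, nestSum]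
    rw [hE_nonempty, hB, one_div_mul_eq_div]
    exact sum_abs_fderiv_surplus_sub_le (N := fun k : {k // (N k).Nonempty} => N k.1)
      (μ := fun k => μ k.1) (fun k => k.2) hm0 ((hm k₀).trans (hμ k₀).2) (fun k => hm k)
      fun i => le_ciSup (Set.finite_range fun i => |v i - vb i|).bddAbove i
  · have hE_const : E = fun _ => 0 := by
      funext u
      simp_all [not_nonempty_iff_eq_empty, zero_rpow (hμ _).1.ne']
    simp only [hE_const, fderiv_fun_const, Pi.zero_apply, zero_apply,
      sub_self, abs_zero, sum_const_zero]
    exact mul_nonneg (hB ▸ div_nonneg zero_le_one (Real.iInf_nonneg fun ℓ => (hμ ℓ).1.le))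
      (Real.iSup_nonneg fun i => abs_nonneg _)

theorem nested_logit_surplus_strongly_smooth
    (n L : ℕ) (hL : 0 < L)
    (N : Fin L → Finset (Fin n)) (μ : Fin L → ℝ)
    (hμ : ∀ ℓ, 0 < μ ℓ ∧ μ ℓ ≤ 1)
    (hdisj : ∀ ℓ ℓ', ℓ ≠ ℓ' → Disjoint (N ℓ) (N ℓ'))
    (hcover : Finset.univ.biUnion N = (Finset.univ : Finset (Fin n)))
    (E : (Fin n → ℝ) → ℝ)
    (hE : E = fun v => Real.log (∑ ℓ, (∑ i ∈ N ℓ, Real.exp (v i / μ ℓ)) ^ (μ ℓ)))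
    (B : ℝ) (hB : B = 1 / ⨅ ℓ, μ ℓ) :
    ∀ v vb : Fin n → ℝ,
      ∑ i, |fderiv ℝ E v (Pi.single i 1) - fderiv ℝ E vb (Pi.single i 1)| ≤
        B * ⨆ i, |v i - vb i| :=
  nested_logit_surplus_strongly_smooth_general n L N μ hμ E hE B hB
end

section
/- The multinomial logit surplus function E(v) = ln(∑_{i=1}^{n} e^{v^(i)}) (the log-sum-exp function) is 1-strongly smooth with respect to the ℓ∞ norm: ‖∇E(v) − ∇E(v̄)‖₁ ≤ ‖v − v̄‖∞ for all v, v̄ ∈ ℝⁿ. -/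
/-!
The gradient of `v ↦ log ∑ exp (v i)` is the softmax map. For probability vectors `p, q`,
`∑ |p i - q i| = 2 (p(A) - q(A))` with `A = {q ≤ p}`. If `|v i - w i| ≤ ε` for all `i`, the weights
`exp (v i)` and `exp (w i)` differ by factors in `[e^{-ε}, e^ε]`, and this forces
`p(A) - q(A) ≤ (e^ε - 1) / (e^ε + 1) = tanh (ε / 2) ≤ ε / 2`.
-/

open Finset Real

/-- Keep the first term of `log ((1 + x) / (1 - x)) = ∑ 2 x^(2k+1) / (2k+1)` at `x = (s - 1) / (s + 1)`. -/
theorem two_mul_sub_one_div_add_one_le_log {s : ℝ} (hs : 1 ≤ s) :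
    2 * ((s - 1) / (s + 1)) ≤ log s := by
  set x := (s - 1) / (s + 1) with hx
  have hx0 : 0 ≤ x := div_nonneg (by linarith) (by linarith)
  have hx1 : |x| < 1 := by
    rw [abs_of_nonneg hx0, div_lt_one (by linarith)]
    linarith
  have hlog : log (1 + x) - log (1 - x) = log s := by
    rw [← log_div (by positivity) (by rw [abs_lt] at hx1; linarith)]
    congr 1
    rw [hx]
    field_simp
    ring
  rw [← hlog]
  simpa using le_hasSum (hasSum_log_sub_log_of_abs_lt_one hx1) 0 fun k _ => by positivity

theorem div_add_sub_div_add_le {a b a' b' s : ℝ} (ha : 0 ≤ a) (hb : 0 ≤ b) (ha' : 0 ≤ a')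
    (hb' : 0 ≤ b') (hab : 0 < a + b) (hab' : 0 < a' + b') (hs : 1 ≤ s)
    (haa' : a ≤ s * a') (hbb' : b' ≤ s * b) :
    a / (a + b) - a' / (a' + b') ≤ (s - 1) / (s + 1) := by
  rw [div_sub_div _ _ hab.ne' hab'.ne', div_le_div_iff₀ (by positivity) (by positivity)]
  -- The goal is affine in `b'`; at the extremal point `a' = a / s`, `b' = s * b` it is
  -- `(a - s * b) ^ 2 ≥ 0`.
  rcases le_total (2 * a) ((s - 1) * b) with h | h
  · nlinarith [mul_nonneg hb' (sub_nonneg.2 h), mul_nonneg ha ha', mul_nonneg hb ha']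
  · nlinarith [mul_nonneg (sub_nonneg.2 hbb') (sub_nonneg.2 h), sq_nonneg (a - s * b),
      mul_nonneg (sub_nonneg.2 haa') (by positivity : 0 ≤ (s - 1) * a + 2 * s * b)]

theorem Finset.sum_abs_eq_two_mul_sum_posPart {ι : Type*} {s : Finset ι} {x : ι → ℝ}
    (h : ∑ i ∈ s, x i = 0) : ∑ i ∈ s, |x i| = 2 * ∑ i ∈ s, (x i)⁺ := by
  have habs (a : ℝ) : |a| = 2 * a⁺ - a := by
    linarith [posPart_add_negPart a, posPart_sub_negPart a]
  simp only [habs, sum_sub_distrib, ← mul_sum, h, sub_zero]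

theorem sum_exp_le_exp_mul_sum_exp {ι : Type*} (s : Finset ι) {v w : ι → ℝ} {ε : ℝ}
    (h : ∀ i ∈ s, v i ≤ w i + ε) : ∑ i ∈ s, exp (v i) ≤ exp ε * ∑ i ∈ s, exp (w i) := by
  rw [mul_sum]
  refine sum_le_sum fun i hi => ?_
  rw [← exp_add]
  exact exp_le_exp.2 (by linarith [h i hi])

section Softmax

variable {ι : Type*} [Fintype ι]

noncomputable def softmax (v : ι → ℝ) (i : ι) : ℝ := exp (v i) / ∑ j, exp (v j)

theorem sum_exp_pos [Nonempty ι] (v : ι → ℝ) : 0 < ∑ j, exp (v j) :=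
  sum_pos (fun _ _ => exp_pos _) univ_nonempty

theorem sum_softmax [Nonempty ι] (v : ι → ℝ) : ∑ i, softmax v i = 1 := by
  simp only [softmax, ← sum_div]
  exact div_self (sum_exp_pos v).ne'

theorem sum_softmax_sub_sum_softmax_le [Nonempty ι] [DecidableEq ι] (s : Finset ι)
    {v w : ι → ℝ} {ε : ℝ} (h : ∀ i, |v i - w i| ≤ ε) :
    ∑ i ∈ s, softmax v i - ∑ i ∈ s, softmax w i ≤ (exp ε - 1) / (exp ε + 1) := by
  have hε : 0 ≤ ε := (abs_nonneg _).trans (h (Classical.arbitrary ι))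
  have hmass (v : ι → ℝ) : ∑ i ∈ s, softmax v i =
      (∑ i ∈ s, exp (v i)) / (∑ i ∈ s, exp (v i) + ∑ i ∈ sᶜ, exp (v i)) := by
    rw [sum_add_sum_compl, sum_div]
    rfl
  rw [hmass, hmass]
  refine div_add_sub_div_add_le (by positivity) (by positivity) (by positivity) (by positivity)
    (by rw [sum_add_sum_compl]; exact sum_exp_pos v)
    (by rw [sum_add_sum_compl]; exact sum_exp_pos w) (one_le_exp hε)
    (sum_exp_le_exp_mul_sum_exp s fun i _ => ?_) (sum_exp_le_exp_mul_sum_exp sᶜ fun i _ => ?_)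
  · linarith [(abs_le.1 (h i)).2]
  · linarith [(abs_le.1 (h i)).1]

theorem sum_abs_softmax_sub_le [Nonempty ι] {v w : ι → ℝ} {ε : ℝ}
    (h : ∀ i, |v i - w i| ≤ ε) : ∑ i, |softmax v i - softmax w i| ≤ ε := by
  classical
  have hε : 0 ≤ ε := (abs_nonneg _).trans (h (Classical.arbitrary ι))
  calc ∑ i, |softmax v i - softmax w i|
      = 2 * ∑ i, (softmax v i - softmax w i)⁺ :=
        sum_abs_eq_two_mul_sum_posPart (by rw [sum_sub_distrib, sum_softmax, sum_softmax, sub_self])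
    _ = 2 * (∑ i with softmax w i ≤ softmax v i, softmax v i -
          ∑ i with softmax w i ≤ softmax v i, softmax w i) := by
        rw [← sum_sub_distrib, sum_filter]
        simp only [posPart_eq_ite, sub_nonneg]
    _ ≤ 2 * ((exp ε - 1) / (exp ε + 1)) := by
        gcongr
        exact sum_softmax_sub_sum_softmax_le _ h
    _ ≤ ε := by simpa using two_mul_sub_one_div_add_one_le_log (one_le_exp hε)

theorem fderiv_logSumExp_single [DecidableEq ι] (v : ι → ℝ) (i : ι) :
    fderiv ℝ (fun v : ι → ℝ => log (∑ j, exp (v j))) v (Pi.single i 1) = softmax v i := by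
  have : Nonempty ι := ⟨i⟩
  have hsum : HasFDerivAt (fun v : ι → ℝ => ∑ j, exp (v j))
      (∑ j, exp (v j) • ContinuousLinearMap.proj j) v :=
    HasFDerivAt.fun_sum fun j _ => (hasFDerivAt_apply j v).exp
  rw [(hsum.log (sum_exp_pos v).ne').fderiv]
  simp [softmax, Pi.single_apply, div_eq_inv_mul]

end Softmax

theorem logsumexp_one_strongly_smooth
    (n : ℕ)
    (E : (Fin n → ℝ) → ℝ)
    (hE : E = fun v => Real.log (∑ i, Real.exp (v i))) :
    ∀ v vb : Fin n → ℝ,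
      ∑ i, |fderiv ℝ E v (Pi.single i 1) - fderiv ℝ E vb (Pi.single i 1)| ≤
        ⨆ i, |v i - vb i| := by
  subst hE
  intro v vb
  rcases isEmpty_or_nonempty (Fin n) with _ | _
  · simp
  simp only [fderiv_logSumExp_single]
  exact sum_abs_softmax_sub_le fun i =>
    le_ciSup (f := fun i => |v i - vb i|) (Finite.bddAbove_range _) i
end

section
/- Suppose there exist ȳ_k ∈ Y_k (k = 1,…,K) and q̄_j ∈ △ (j = 1,…,J) with ∑_k ȳ_k > ∑_j 𝒩_j q̄_j componentwise (productivity condition). Then the total expected revenue function TER(p) = ∑_{k=1}^{K} π_k(p) + ∑_{j=1}^{J} 𝒩_j E_j(p) satisfies TER(p) ≥ t‖p‖₁ + C for all p ∈ ℝⁿ₊, for some constants t > 0 and C ∈ ℝ; in particular, the sublevel sets of TER restricted to ℝⁿ₊ are bounded. -/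
/-!
Testing the maxima defining `π k` and `E j` at the productive plan `ybar`, `qbar` bounds `TER`
below by the affine function `p ↦ ⟨p, d⟩ + C` with margin `d = ∑ₖ ȳₖ - ∑ⱼ 𝒩ⱼ q̄ⱼ`.
The productivity condition makes every coordinate of `d` positive, so on the orthant
`⟨p, d⟩ ≥ (minᵢ dᵢ) ‖p‖₁`, and sublevel sets are bounded in `ℓ¹`, hence in any norm.
-/

open Finset Filter Topology

section
variable {ι : Type*} [Fintype ι]

lemma exists_pos_forall_le_of_forall_pos {d : ι → ℝ} (hd : ∀ i, 0 < d i) :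
    ∃ t, 0 < t ∧ ∀ i, t ≤ d i :=
  ((eventually_mem_nhdsWithin (s := Set.Ioi 0)).and
    (eventually_all.2 fun i => nhdsWithin_le_nhds (eventually_le_nhds (hd i)))).exists

lemma mul_sum_abs_le_sum_mul {d p : ι → ℝ} {t : ℝ} (htd : ∀ i, t ≤ d i) (hp : ∀ i, 0 ≤ p i) :
    t * ∑ i, |p i| ≤ ∑ i, p i * d i := by
  rw [mul_sum]
  refine sum_le_sum fun i _ => ?_
  rw [abs_of_nonneg (hp i), mul_comm]
  exact mul_le_mul_of_nonneg_left (htd i) (hp i)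

lemma norm_le_sum_abs (p : ι → ℝ) : ‖p‖ ≤ ∑ i, |p i| :=
  (pi_norm_le_iff_of_nonneg (sum_nonneg fun i _ => abs_nonneg (p i))).2 fun i =>
    single_le_sum (fun j _ => abs_nonneg (p j)) (mem_univ i)

lemma isBounded_of_sum_abs_le {s : Set (ι → ℝ)} {R : ℝ} (h : ∀ p ∈ s, ∑ i, |p i| ≤ R) :
    Bornology.IsBounded s :=
  isBounded_iff_forall_norm_le.2 ⟨R, fun p hp => (norm_le_sum_abs p).trans (h p hp)⟩

end

lemma sum_mul_sub_add_le_sum_add_sum_mul {ι κ μ : Type*} [Fintype ι] [Fintype κ] [Fintype μ]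
    {p : ι → ℝ} {ybar : κ → ι → ℝ} {qbar a : μ → ι → ℝ} {𝒩 : μ → ℝ} (h𝒩 : ∀ j, 0 ≤ 𝒩 j)
    {cost π : κ → ℝ} {e E : μ → ℝ}
    (hπ : ∀ k, (∑ i, p i * ybar k i) - cost k ≤ π k)
    (hE : ∀ j, (∑ i, qbar j i * (a j i - p i)) - e j ≤ E j) :
    (∑ i, p i * (∑ k, ybar k i - ∑ j, 𝒩 j * qbar j i)) +
        ((∑ j, 𝒩 j * ((∑ i, qbar j i * a j i) - e j)) - ∑ k, cost k) ≤
      (∑ k, π k) + ∑ j, 𝒩 j * E j := by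
  have hπsum := sum_le_sum fun k (_ : k ∈ univ) => hπ k
  have hEsum := sum_le_sum fun j (_ : j ∈ univ) => mul_le_mul_of_nonneg_left (hE j) (h𝒩 j)
  have hmargin : ∑ i, p i * (∑ k, ybar k i - ∑ j, 𝒩 j * qbar j i) =
      (∑ k, ∑ i, p i * ybar k i) - ∑ j, 𝒩 j * ∑ i, qbar j i * p i := by
    simp only [mul_sub, mul_sum, sum_sub_distrib]
    rw [sum_comm (f := fun i k => p i * ybar k i), sum_comm (f := fun i j => p i * (𝒩 j * qbar j i))]
    congr 1
    exact sum_congr rfl fun j _ => sum_congr rfl fun i _ => by ring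
  simp only [mul_sub, sum_sub_distrib, mul_sum] at hπsum hEsum hmargin ⊢
  linarith

theorem TER_coercive_on_orthant_general
    (n K J : ℕ)
    (Y : Fin K → Set (Fin n → ℝ))
    (c : Fin K → (Fin n → ℝ) → ℝ)
    (Δ : Set (Fin n → ℝ))
    (Estar : Fin J → (Fin n → ℝ) → ℝ)
    (a : Fin J → Fin n → ℝ)
    (𝒩 : Fin J → ℝ) (h𝒩 : ∀ j, 0 < 𝒩 j)
    (π : Fin K → (Fin n → ℝ) → ℝ)
    (hπ : ∀ k p, IsGreatest ((fun y => (∑ i, p i * y i) - c k y) '' Y k) (π k p))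
    (E : Fin J → (Fin n → ℝ) → ℝ)
    (hEj : ∀ j p, IsGreatest ((fun q => (∑ i, q i * (a j i - p i)) - Estar j q) '' Δ) (E j p))
    (ybar : Fin K → Fin n → ℝ) (hybar : ∀ k, ybar k ∈ Y k)
    (qbar : Fin J → Fin n → ℝ) (hqbar : ∀ j, qbar j ∈ Δ)
    (hprod : ∀ i, (∑ j, 𝒩 j * qbar j i) < ∑ k, ybar k i)
    (TER : (Fin n → ℝ) → ℝ)
    (hTER : TER = fun p => (∑ k, π k p) + ∑ j, 𝒩 j * E j p) :
    (∃ t : ℝ, 0 < t ∧ ∃ C : ℝ, ∀ p : Fin n → ℝ, (∀ i, 0 ≤ p i) →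
      t * (∑ i, |p i|) + C ≤ TER p) ∧
    ∀ r : ℝ, Bornology.IsBounded {p : Fin n → ℝ | (∀ i, 0 ≤ p i) ∧ TER p ≤ r} := by
  obtain ⟨t, ht, htd⟩ := exists_pos_forall_le_of_forall_pos fun i => sub_pos.2 (hprod i)
  set C := (∑ j, 𝒩 j * ((∑ i, qbar j i * a j i) - Estar j (qbar j))) - ∑ k, c k (ybar k)
  have coercive : ∀ p : Fin n → ℝ, (∀ i, 0 ≤ p i) → t * (∑ i, |p i|) + C ≤ TER p := by
    intro p hp
    have affine_bound := sum_mul_sub_add_le_sum_add_sum_mul (fun j => (h𝒩 j).le)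
      (fun k => (hπ k p).2 ⟨ybar k, hybar k, rfl⟩) (fun j => (hEj j p).2 ⟨qbar j, hqbar j, rfl⟩)
    rw [hTER]
    linarith [mul_sum_abs_le_sum_mul htd hp]
  refine ⟨⟨t, ht, C, coercive⟩, fun r => isBounded_of_sum_abs_le (R := (r - C) / t) ?_⟩
  rintro p ⟨hp, hpr⟩
  rw [le_div_iff₀ ht]
  linarith [coercive p hp]

theorem TER_coercive_on_orthant
    (n K J : ℕ)
    (Y : Fin K → Set (Fin n → ℝ))
    (hYclosed : ∀ k, IsClosed (Y k)) (hYconv : ∀ k, Convex ℝ (Y k))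
    (c : Fin K → (Fin n → ℝ) → ℝ)
    (Δ : Set (Fin n → ℝ))
    (hΔ : Δ = {q : Fin n → ℝ | (∀ i, 0 ≤ q i) ∧ ∑ i, q i = 1})
    (Estar : Fin J → (Fin n → ℝ) → ℝ)
    (hEstarconv : ∀ j, ConvexOn ℝ Δ (Estar j))
    (a : Fin J → Fin n → ℝ)
    (𝒩 : Fin J → ℝ) (h𝒩 : ∀ j, 0 < 𝒩 j)
    (π : Fin K → (Fin n → ℝ) → ℝ)
    (hπ : ∀ k p, IsGreatest ((fun y => (∑ i, p i * y i) - c k y) '' Y k) (π k p))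
    (E : Fin J → (Fin n → ℝ) → ℝ)
    (hEj : ∀ j p, IsGreatest ((fun q => (∑ i, q i * (a j i - p i)) - Estar j q) '' Δ) (E j p))
    (ybar : Fin K → Fin n → ℝ) (hybar : ∀ k, ybar k ∈ Y k)
    (qbar : Fin J → Fin n → ℝ) (hqbar : ∀ j, qbar j ∈ Δ)
    (hprod : ∀ i, (∑ j, 𝒩 j * qbar j i) < ∑ k, ybar k i)
    (TER : (Fin n → ℝ) → ℝ)
    (hTER : TER = fun p => (∑ k, π k p) + ∑ j, 𝒩 j * E j p) :
    (∃ t : ℝ, 0 < t ∧ ∃ C : ℝ, ∀ p : Fin n → ℝ, (∀ i, 0 ≤ p i) →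
      t * (∑ i, |p i|) + C ≤ TER p) ∧
    ∀ r : ℝ, Bornology.IsBounded {p : Fin n → ℝ | (∀ i, 0 ≤ p i) ∧ TER p ≤ r} :=
  TER_coercive_on_orthant_general n K J Y c Δ Estar a 𝒩 h𝒩 π hπ E hEj ybar hybar qbar hqbar hprod
    TER hTER
end
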